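/- With c₁†, c₂† as defined by the type A_2^{(2)†} recurrences, one has c₁†(k22,k21,k11) = q^{k21(k21-1) + 2k22 + 2k21} · qmultinomial(k22+k21+k11; k22,k21,k11)_{q²}. -/

import Mathlib

open Polynomial

/-- Gaussian binomial coefficient in `ℤ[q]`, via the `q`-Pascal recurrence;
equals `(q)_n / ((q)_k (q)_{n-k})`. -/
noncomputable def qbinom : ℕ → ℕ → Polynomial ℤ
  | _, 0 => 1
  | 0, _ + 1 => 0
  | n + 1, k + 1 => qbinom n k + X ^ (k + 1) * qbinom n (k + 1)

/-- Gaussian multinomial coefficient `(a+b+c; a,b,c)_q = (q)_{a+b+c}/((q)_a(q)_b(q)_c)`. -/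
noncomputable def qmult (a b c : ℕ) : Polynomial ℤ :=
  qbinom (a + b + c) a * qbinom (b + c) b

/-!
The recurrences determine `c₁†` and `c₂†` uniquely, by induction on `a + b + c`, so it suffices to
exhibit one solution. Writing `M = qmult a b c` evaluated at `q²`, take `c₂† = q^{b(b-1)} M` and
`c₁† = q^{2(a+b)} c₂†`. The `c₂†` recurrence is then the `q`-Pascal rule
`M(a,b,c) = M(a-1,b,c) + q^{2a} M(a,b-1,c) + q^{2(a+b)} M(a,b,c-1)`, and the `c₁†` recurrence minus
`q^{2n}` times the `c₂†` recurrence is the absorption identity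
`(1 - q^{2c}) M(a,b,c) = (1 - q^{2n}) M(a,b,c-1)`.
-/

theorem qbinom_zero_right (n : ℕ) : qbinom n 0 = 1 := by cases n <;> rfl

theorem qbinom_succ_succ (n k : ℕ) :
    qbinom (n + 1) (k + 1) = qbinom n k + X ^ (k + 1) * qbinom n (k + 1) := rfl

theorem qbinom_eq_zero_of_lt {n k : ℕ} (h : n < k) : qbinom n k = 0 := by
  induction n generalizing k with
  | zero => obtain ⟨k, rfl⟩ := Nat.exists_eq_succ_of_ne_zero h.ne'; rfl
  | succ n ih =>
    obtain ⟨k, rfl⟩ := Nat.exists_eq_succ_of_ne_zero (by omega : k ≠ 0)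
    rw [qbinom_succ_succ, ih (by omega), ih (by omega), mul_zero, add_zero]

theorem one_sub_X_pow_mul_qbinom_succ_right (m k : ℕ) :
    (1 - X ^ (k + 1)) * qbinom (m + k) (k + 1) = (1 - (X : ℤ[X]) ^ m) * qbinom (m + k) k := by
  induction m generalizing k with
  | zero => simp [qbinom_eq_zero_of_lt]
  | succ m ihm =>
    induction k with
    | zero =>
      have := ihm 0
      simp only [add_zero, zero_add, pow_one, qbinom_zero_right] at this ⊢
      rw [qbinom_succ_succ, qbinom_zero_right]
      linear_combination X * this
    | succ j ihk =>
      have hm := ihm (j + 1)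
      rw [show m + 1 + (j + 1) = m + j + 1 + 1 by omega, qbinom_succ_succ (m + j + 1) (j + 1),
        qbinom_succ_succ (m + j + 1) j]
      rw [show m + 1 + j = m + j + 1 by omega] at ihk
      rw [show m + (j + 1) = m + j + 1 by omega] at hm
      linear_combination ihk + X ^ (j + 2) * hm

theorem one_sub_X_pow_mul_qbinom_succ_left (m k : ℕ) :
    (1 - X ^ (m + 1)) * qbinom (m + k + 1) k = (1 - (X : ℤ[X]) ^ (m + k + 1)) * qbinom (m + k) k := by
  have h₁ := one_sub_X_pow_mul_qbinom_succ_right (m + 1) k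
  have h₂ := one_sub_X_pow_mul_qbinom_succ_right m k
  rw [add_right_comm, qbinom_succ_succ] at h₁
  linear_combination -h₁ + X ^ (k + 1) * h₂

theorem one_sub_X_pow_mul_qmult_succ (a b c : ℕ) :
    (1 - X ^ (c + 1)) * qmult a b (c + 1) = (1 - (X : ℤ[X]) ^ (a + b + c + 1)) * qmult a b c := by
  have hb := one_sub_X_pow_mul_qbinom_succ_left c b
  have ha := one_sub_X_pow_mul_qbinom_succ_left (c + b) a
  rw [add_comm c b] at hb ha
  rw [show b + c + a = a + b + c by ring] at ha
  simp only [qmult, ← add_assoc]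
  linear_combination qbinom (a + b + c + 1) a * hb + qbinom (b + c) b * ha

theorem qmult_pascal (a b c : ℕ) (h : 1 ≤ a + b + c) :
    qmult a b c = (if a = 0 then 0 else qmult (a - 1) b c)
      + X ^ a * (if b = 0 then 0 else qmult a (b - 1) c)
      + X ^ (a + b) * (if c = 0 then 0 else qmult a b (c - 1)) := by
  rcases a with _ | a <;> rcases b with _ | b <;> rcases c with _ | c <;>
    simp only [qmult, ← add_assoc, Nat.add_right_comm _ 1, add_zero, zero_add, qbinom_succ_succ,
      qbinom_zero_right, qbinom_eq_zero_of_lt (Nat.lt_succ_self _), Nat.add_sub_cancel, if_true,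
      if_false, Nat.succ_ne_zero, Nat.le_zero, one_ne_zero] at h ⊢
  all_goals ring_nf

noncomputable def closedC₂ (a b c : ℕ) : ℤ[X] := X ^ (b * (b - 1)) * (qmult a b c).comp (X ^ 2)

noncomputable def closedC₁ (a b c : ℕ) : ℤ[X] :=
  X ^ (b * (b - 1) + 2 * a + 2 * b) * (qmult a b c).comp (X ^ 2)

theorem closedC₂_recurrence (a b c : ℕ) (h : 1 ≤ a + b + c) :
    closedC₂ a b c = (if a = 0 then 0 else closedC₂ (a - 1) b c)
      + (if b = 0 then 0 else closedC₁ a (b - 1) c)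
      + (if c = 0 then 0 else closedC₁ a b (c - 1)) := by
  have hM := congrArg (fun p : ℤ[X] => p.comp (X ^ 2)) (qmult_pascal a b c h)
  simp only [add_comp, mul_comp, X_pow_comp, ← pow_mul, apply_ite (fun p : ℤ[X] => p.comp (X ^ 2)),
    zero_comp] at hM
  rw [closedC₂, hM]
  cases b with
  | zero => simp only [closedC₂, closedC₁]; split_ifs <;> ring
  | succ b =>
    have hw : (b + 1) * b = b * (b - 1) + 2 * b := by cases b <;> simp; ring
    simp only [closedC₂, closedC₁, hw, Nat.add_sub_cancel]
    split_ifs <;> ring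

theorem closedC₁_recurrence (a b c : ℕ) (h : 1 ≤ a + b + c) :
    closedC₁ a b c = X ^ (2 * (a + b + c)) * (if a = 0 then 0 else closedC₂ (a - 1) b c)
      + X ^ (2 * (a + b + c)) * (if b = 0 then 0 else closedC₁ a (b - 1) c)
      + (if c = 0 then 0 else closedC₁ a b (c - 1)) := by
  suffices closedC₁ a b c = X ^ (2 * (a + b + c)) * closedC₂ a b c
      + (1 - X ^ (2 * (a + b + c))) * (if c = 0 then 0 else closedC₁ a b (c - 1)) by
    linear_combination this + X ^ (2 * (a + b + c)) * closedC₂_recurrence a b c h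
  cases c with
  | zero => simp only [closedC₁, closedC₂, if_true, mul_zero, add_zero]; ring
  | succ c =>
    have hM := congrArg (fun p : ℤ[X] => p.comp (X ^ 2)) (one_sub_X_pow_mul_qmult_succ a b c)
    simp only [mul_comp, sub_comp, one_comp, X_pow_comp, ← pow_mul] at hM
    simp only [closedC₁, closedC₂, Nat.add_sub_cancel, Nat.succ_ne_zero, if_false]
    linear_combination X ^ (b * (b - 1) + 2 * a + 2 * b) * hM

def extendByZero {R : Type*} [Zero R] (f : ℕ → ℕ → ℕ → R) (a b c : ℤ) : R :=
  if 0 ≤ a ∧ 0 ≤ b ∧ 0 ≤ c then f a.toNat b.toNat c.toNat else 0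

section extendByZero

variable {R : Type*} [Zero R] (f : ℕ → ℕ → ℕ → R)

@[simp]
theorem extendByZero_natCast (a b c : ℕ) : extendByZero f a b c = f a b c := by
  simp [extendByZero]

theorem extendByZero_of_neg {a b c : ℤ} (h : a < 0 ∨ b < 0 ∨ c < 0) :
    extendByZero f a b c = 0 :=
  if_neg (by omega)

theorem extendByZero_sub_one_left (a b c : ℕ) :
    extendByZero f ((a : ℤ) - 1) b c = if a = 0 then 0 else f (a - 1) b c := by
  split_ifs with ha
  · exact extendByZero_of_neg f (by omega)
  · rw [← Nat.cast_pred (by omega), extendByZero_natCast]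

theorem extendByZero_sub_one_middle (a b c : ℕ) :
    extendByZero f a ((b : ℤ) - 1) c = if b = 0 then 0 else f a (b - 1) c := by
  split_ifs with hb
  · exact extendByZero_of_neg f (by omega)
  · rw [← Nat.cast_pred (by omega), extendByZero_natCast]

theorem extendByZero_sub_one_right (a b c : ℕ) :
    extendByZero f a b ((c : ℤ) - 1) = if c = 0 then 0 else f a b (c - 1) := by
  split_ifs with hc
  · exact extendByZero_of_neg f (by omega)
  · rw [← Nat.cast_pred (by omega), extendByZero_natCast]

end extendByZero

structure IsDaggerSolution (c₁ c₂ : ℤ → ℤ → ℤ → ℤ[X]) : Prop where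
  eq_zero_of_neg : ∀ a b c : ℤ, a < 0 ∨ b < 0 ∨ c < 0 → c₁ a b c = 0 ∧ c₂ a b c = 0
  eq_one : c₁ 0 0 0 = 1 ∧ c₂ 0 0 0 = 1
  recurrence : ∀ a b c : ℕ, 1 ≤ a + b + c →
    c₁ a b c = X ^ (2 * (a + b + c)) * c₂ ((a : ℤ) - 1) b c
      + X ^ (2 * (a + b + c)) * c₁ a ((b : ℤ) - 1) c
      + c₁ a b ((c : ℤ) - 1) ∧
    c₂ a b c = c₂ ((a : ℤ) - 1) b c
      + c₁ a ((b : ℤ) - 1) c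
      + c₁ a b ((c : ℤ) - 1)

namespace IsDaggerSolution

variable {c₁ c₂ d₁ d₂ : ℤ → ℤ → ℤ → ℤ[X]}

theorem unique (h : IsDaggerSolution c₁ c₂) (h' : IsDaggerSolution d₁ d₂) :
    c₁ = d₁ ∧ c₂ = d₂ := by
  have agree_of_neg (a b c : ℤ) (hneg : a < 0 ∨ b < 0 ∨ c < 0) :
      c₁ a b c = d₁ a b c ∧ c₂ a b c = d₂ a b c := by
    obtain ⟨h₁, h₂⟩ := h.eq_zero_of_neg a b c hneg
    obtain ⟨h₁', h₂'⟩ := h'.eq_zero_of_neg a b c hneg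
    exact ⟨h₁.trans h₁'.symm, h₂.trans h₂'.symm⟩
  suffices ∀ n : ℕ, ∀ a b c : ℤ, a + b + c < n → c₁ a b c = d₁ a b c ∧ c₂ a b c = d₂ a b c by
    refine ⟨?_, ?_⟩ <;> funext a b c
    exacts [(this ((a + b + c).toNat + 1) a b c (by omega)).1,
      (this ((a + b + c).toNat + 1) a b c (by omega)).2]
  intro n
  induction n with
  | zero => exact fun a b c hn ↦ agree_of_neg a b c (by omega)
  | succ n ih =>
    intro a b c hn
    by_cases hneg : a < 0 ∨ b < 0 ∨ c < 0
    · exact agree_of_neg a b c hneg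
    simp only [not_or, not_lt] at hneg
    obtain ⟨a, rfl⟩ := Int.eq_ofNat_of_zero_le hneg.1
    obtain ⟨b, rfl⟩ := Int.eq_ofNat_of_zero_le hneg.2.1
    obtain ⟨c, rfl⟩ := Int.eq_ofNat_of_zero_le hneg.2.2
    rcases Nat.eq_zero_or_pos (a + b + c) with h0 | hpos
    · obtain ⟨rfl, rfl, rfl⟩ : a = 0 ∧ b = 0 ∧ c = 0 := by omega
      exact ⟨h.eq_one.1.trans h'.eq_one.1.symm, h.eq_one.2.trans h'.eq_one.2.symm⟩
    obtain ⟨ha₁, ha₂⟩ := ih (a - 1) b c (by omega)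
    obtain ⟨hb₁, -⟩ := ih a (b - 1) c (by omega)
    obtain ⟨hc₁, -⟩ := ih a b (c - 1) (by omega)
    rw [(h.recurrence a b c hpos).1, (h.recurrence a b c hpos).2,
      (h'.recurrence a b c hpos).1, (h'.recurrence a b c hpos).2, ha₂, hb₁, hc₁]
    exact ⟨rfl, rfl⟩

end IsDaggerSolution

theorem isDaggerSolution_closedC :
    IsDaggerSolution (extendByZero closedC₁) (extendByZero closedC₂) where
  eq_zero_of_neg a b c h := ⟨extendByZero_of_neg _ h, extendByZero_of_neg _ h⟩
  eq_one := by simp [extendByZero, closedC₁, closedC₂, qmult, qbinom_zero_right]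
  recurrence a b c h := by
    simp only [extendByZero_natCast, extendByZero_sub_one_left, extendByZero_sub_one_middle,
      extendByZero_sub_one_right]
    exact ⟨closedC₁_recurrence a b c h, closedC₂_recurrence a b c h⟩

/-- if `c₁†, c₂† : ℤ³ → ℤ[q]` vanish on negative arguments, equal `1` at
`(0,0,0)`, and satisfy the type `A₂⁽²⁾†` recurrences
`c₁†(a,b,c) = q^{2n} c₂†(a-1,b,c) + q^{2n} c₁†(a,b-1,c) + c₁†(a,b,c-1)` and
`c₂†(a,b,c) = c₂†(a-1,b,c) + c₁†(a,b-1,c) + c₁†(a,b,c-1)` with `n = a+b+c ≥ 1`,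
then `c₁†(a,b,c) = q^{b(b-1)+2a+2b} · qmultinomial(a+b+c; a,b,c)` evaluated at `q²`. -/
theorem c1_dagger_closed_form
    (c₁ c₂ : ℤ → ℤ → ℤ → Polynomial ℤ)
    (hneg : ∀ a b c : ℤ, a < 0 ∨ b < 0 ∨ c < 0 → c₁ a b c = 0 ∧ c₂ a b c = 0)
    (hinit : c₁ 0 0 0 = 1 ∧ c₂ 0 0 0 = 1)
    (hrec : ∀ a b c : ℕ, 1 ≤ a + b + c →
      c₁ a b c = X ^ (2 * (a + b + c)) * c₂ ((a : ℤ) - 1) b c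
        + X ^ (2 * (a + b + c)) * c₁ a ((b : ℤ) - 1) c
        + c₁ a b ((c : ℤ) - 1) ∧
      c₂ a b c = c₂ ((a : ℤ) - 1) b c
        + c₁ a ((b : ℤ) - 1) c
        + c₁ a b ((c : ℤ) - 1)) :
    ∀ a b c : ℕ, c₁ a b c = X ^ (b * (b - 1) + 2 * a + 2 * b) * (qmult a b c).comp (X ^ 2) := by
  obtain ⟨rfl, -⟩ := IsDaggerSolution.unique ⟨hneg, hinit, hrec⟩ isDaggerSolution_closedC
  intro a b c
  exact extendByZero_natCast closedC₁ a b c
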